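/- Let k₂ > 0 and define s₀(t) = 2·sinh²(√(k₂/2)·t) − √(2k₂)·t·cosh(√(k₂/2)·t)·sinh(√(k₂/2)·t), s₁(t) = −2√(2k₂³)·sinh(√(k₂/2)·t)·cosh(√(k₂/2)·t), s₂(t) = −2k₂·sinh²(√(k₂/2)·t). Let K = [[0, 0],[0, k₂ I]]. Then S(t) = ½·[[−(s₁(t)/s₀(t)) I, (s₂(t)/s₀(t)) I],[(s₂(t)/s₀(t)) I, −(s₀'(t)/s₀(t)) I]] solves the matrix Riccati equation S'(t) = S(t)C + Cᵀ S(t) + S(t) D S(t) − K for all t > 0, and S(t)⁻¹ → 0 as t → 0⁺. (This is the case k₁ = 0, k₂ > 0 of the explicit-solution lemma.) -/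

import Mathlib

/-!
Write `S = ½ [[-f, g], [g, -h]] ⊗ I` with `f = s₁/s₀`, `g = s₂/s₀`, `h = s₀'/s₀`. The Riccati
equation with `K = [[k₁ I, 0], [0, k₂ I]]` reduces to three scalar equations for the entries, which
in terms of `s₀, s₁, s₂` read `s₂' = s₁`, `s₁ s₀' - s₁' s₀ = s₂² - 2 k₁ s₀²` and
`s₀'' = 2 s₂ + 2 k₂ s₀`. For `k₂ = 2b²` and `u = 2bt` one has `s₀ = cosh u - 1 - (u/2) sinh u`,
`s₁ = -4b³ sinh u`, `s₂ = -2b² (cosh u - 1)`, and the three equations become hyperbolic identities;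
`s₀ < 0` for `t > 0` because `tanh x < x`. For `k₁ = 0` the middle identity also gives
`S⁻¹ = -(2/s₁') [[s₀', s₂], [s₂, s₁]] ⊗ I`, which tends to `0` since `s₁' = -8b⁴ cosh u` does not
vanish while `s₀', s₁, s₂` vanish at `t = 0`.
-/

noncomputable section
open Real Set Matrix Filter

/-- The `2n × 2n` matrix `C = [[0, −I], [0, 0]]` in `n × n` block form. -/
def Cmat (n : ℕ) : Matrix (Fin n ⊕ Fin n) (Fin n ⊕ Fin n) ℝ :=
  Matrix.fromBlocks 0 (-1) 0 0

/-- The `2n × 2n` matrix `D = [[0, 0], [0, 2I]]` in `n × n` block form. -/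
def Dmat (n : ℕ) : Matrix (Fin n ⊕ Fin n) (Fin n ⊕ Fin n) ℝ :=
  Matrix.fromBlocks 0 0 0 ((2 : ℝ) • 1)

/-- The block-diagonal matrix `[[a·I, 0], [0, b·I]]`. -/
def blockDiag (n : ℕ) (a b : ℝ) : Matrix (Fin n ⊕ Fin n) (Fin n ⊕ Fin n) ℝ :=
  Matrix.fromBlocks (a • 1) 0 0 (b • 1)

/-- The matrix `½·[[-(s₁/s₀)I, (s₂/s₀)I], [(s₂/s₀)I, -(s₀'/s₀)I]]`. -/
def harnackMatrix (n : ℕ) (s₀ s₁ s₂ : ℝ → ℝ) (t : ℝ) :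
    Matrix (Fin n ⊕ Fin n) (Fin n ⊕ Fin n) ℝ :=
  (1/2 : ℝ) • Matrix.fromBlocks (-(s₁ t / s₀ t) • 1) ((s₂ t / s₀ t) • 1)
    ((s₂ t / s₀ t) • 1) (-(deriv s₀ t / s₀ t) • 1)

/-- `s₀` in the case `k₁ = 0 < k₂`. -/
def s0D (k₂ t : ℝ) : ℝ :=
  2 * Real.sinh (Real.sqrt (k₂ / 2) * t) ^ 2
    - Real.sqrt (2 * k₂) * t * Real.cosh (Real.sqrt (k₂ / 2) * t) *
        Real.sinh (Real.sqrt (k₂ / 2) * t)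

/-- `s₁` in the case `k₁ = 0 < k₂`. -/
def s1D (k₂ t : ℝ) : ℝ :=
  -2 * Real.sqrt (2 * k₂ ^ 3) * Real.sinh (Real.sqrt (k₂ / 2) * t) *
    Real.cosh (Real.sqrt (k₂ / 2) * t)

/-- `s₂` in the case `k₁ = 0 < k₂`. -/
def s2D (k₂ t : ℝ) : ℝ := -2 * k₂ * Real.sinh (Real.sqrt (k₂ / 2) * t) ^ 2

def scalarBlocks (n : ℕ) (a b c d : ℝ) : Matrix (Fin n ⊕ Fin n) (Fin n ⊕ Fin n) ℝ :=
  fromBlocks (a • 1) (b • 1) (c • 1) (d • 1)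

section scalarBlocks

variable {n : ℕ}

lemma scalarBlocks_congr {a b c d a' b' c' d' : ℝ} (ha : a = a') (hb : b = b') (hc : c = c')
    (hd : d = d') : scalarBlocks n a b c d = scalarBlocks n a' b' c' d' := by
  rw [ha, hb, hc, hd]

lemma scalarBlocks_one : scalarBlocks n 1 0 0 1 = 1 := by
  simp [scalarBlocks, fromBlocks_one]

lemma smul_scalarBlocks (r a b c d : ℝ) :
    r • scalarBlocks n a b c d = scalarBlocks n (r * a) (r * b) (r * c) (r * d) := by
  simp [scalarBlocks, fromBlocks_smul, smul_smul]

lemma scalarBlocks_add (a b c d a' b' c' d' : ℝ) :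
    scalarBlocks n a b c d + scalarBlocks n a' b' c' d'
      = scalarBlocks n (a + a') (b + b') (c + c') (d + d') := by
  simp [scalarBlocks, fromBlocks_add, add_smul]

lemma scalarBlocks_sub (a b c d a' b' c' d' : ℝ) :
    scalarBlocks n a b c d - scalarBlocks n a' b' c' d'
      = scalarBlocks n (a - a') (b - b') (c - c') (d - d') := by
  ext (i | i) (j | j) <;> simp [scalarBlocks, sub_mul]

lemma scalarBlocks_mul (a b c d a' b' c' d' : ℝ) :
    scalarBlocks n a b c d * scalarBlocks n a' b' c' d'
      = scalarBlocks n (a * a' + b * c') (a * b' + b * d') (c * a' + d * c') (c * b' + d * d') := by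
  simp [scalarBlocks, fromBlocks_multiply, add_smul, smul_smul, mul_comm]

lemma scalarBlocks_transpose (a b c d : ℝ) :
    (scalarBlocks n a b c d)ᵀ = scalarBlocks n a c b d := by
  simp [scalarBlocks, fromBlocks_transpose]

lemma hasDerivAt_scalarBlocks_apply {a b c d : ℝ → ℝ} {a' b' c' d' t : ℝ}
    (ha : HasDerivAt a a' t) (hb : HasDerivAt b b' t) (hc : HasDerivAt c c' t)
    (hd : HasDerivAt d d' t) (i j : Fin n ⊕ Fin n) :
    HasDerivAt (fun τ => scalarBlocks n (a τ) (b τ) (c τ) (d τ) i j)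
      (scalarBlocks n a' b' c' d' i j) t := by
  rcases i with i | i <;> rcases j with j | j <;>
    simp only [scalarBlocks, fromBlocks_apply₁₁, fromBlocks_apply₁₂, fromBlocks_apply₂₁,
      fromBlocks_apply₂₂, Matrix.smul_apply, smul_eq_mul] <;>
    apply HasDerivAt.mul_const <;> assumption

lemma tendsto_scalarBlocks_apply {l : Filter ℝ} {a b c d : ℝ → ℝ} {a₀ b₀ c₀ d₀ : ℝ}
    (ha : Tendsto a l (nhds a₀)) (hb : Tendsto b l (nhds b₀)) (hc : Tendsto c l (nhds c₀))
    (hd : Tendsto d l (nhds d₀)) (i j : Fin n ⊕ Fin n) :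
    Tendsto (fun t => scalarBlocks n (a t) (b t) (c t) (d t) i j) l
      (nhds (scalarBlocks n a₀ b₀ c₀ d₀ i j)) := by
  rcases i with i | i <;> rcases j with j | j <;>
    simp only [scalarBlocks, fromBlocks_apply₁₁, fromBlocks_apply₁₂, fromBlocks_apply₂₁,
      fromBlocks_apply₂₂, Matrix.smul_apply, smul_eq_mul] <;>
    apply Tendsto.mul_const <;> assumption

lemma Cmat_eq_scalarBlocks : Cmat n = scalarBlocks n 0 (-1) 0 0 := by
  simp [Cmat, scalarBlocks]

lemma Dmat_eq_scalarBlocks : Dmat n = scalarBlocks n 0 0 0 2 := by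
  simp [Dmat, scalarBlocks]

lemma blockDiag_eq_scalarBlocks (a b : ℝ) : blockDiag n a b = scalarBlocks n a 0 0 b := by
  simp [_root_.blockDiag, scalarBlocks]

lemma riccati_scalarBlocks (p q r k₁ k₂ : ℝ) :
    scalarBlocks n p q q r * Cmat n + (Cmat n)ᵀ * scalarBlocks n p q q r
        + scalarBlocks n p q q r * Dmat n * scalarBlocks n p q q r - blockDiag n k₁ k₂
      = scalarBlocks n (2 * q ^ 2 - k₁) (2 * q * r - p) (2 * q * r - p)
          (2 * r ^ 2 - 2 * q - k₂) := by
  simp only [Cmat_eq_scalarBlocks, Dmat_eq_scalarBlocks, blockDiag_eq_scalarBlocks,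
    scalarBlocks_transpose, scalarBlocks_mul, scalarBlocks_add, scalarBlocks_sub]
  apply scalarBlocks_congr <;> ring

end scalarBlocks

section harnackMatrix

variable {n : ℕ} {s₀ s₁ s₂ : ℝ → ℝ}

lemma harnackMatrix_eq_scalarBlocks (t : ℝ) :
    harnackMatrix n s₀ s₁ s₂ t = scalarBlocks n (-(s₁ t / s₀ t) / 2) (s₂ t / s₀ t / 2)
      (s₂ t / s₀ t / 2) (-(deriv s₀ t / s₀ t) / 2) := by
  rw [harnackMatrix, ← scalarBlocks, smul_scalarBlocks]
  apply scalarBlocks_congr <;> ring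

theorem harnackMatrix_hasDerivAt_riccati {k₁ k₂ s₁' s₀'' t : ℝ} (h₀ : s₀ t ≠ 0)
    (hs₀ : DifferentiableAt ℝ s₀ t) (hs₀' : HasDerivAt (deriv s₀) s₀'' t)
    (hs₁ : HasDerivAt s₁ s₁' t) (hs₂ : HasDerivAt s₂ (s₁ t) t)
    (hwronskian : s₁ t * deriv s₀ t - s₁' * s₀ t = s₂ t ^ 2 - 2 * k₁ * s₀ t ^ 2)
    (hode : s₀'' = 2 * s₂ t + 2 * k₂ * s₀ t) (i j : Fin n ⊕ Fin n) :
    HasDerivAt (fun τ => harnackMatrix n s₀ s₁ s₂ τ i j)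
      ((harnackMatrix n s₀ s₁ s₂ t * Cmat n + (Cmat n)ᵀ * harnackMatrix n s₀ s₁ s₂ t
        + harnackMatrix n s₀ s₁ s₂ t * Dmat n * harnackMatrix n s₀ s₁ s₂ t
        - blockDiag n k₁ k₂) i j) t := by
  simp only [harnackMatrix_eq_scalarBlocks, riccati_scalarBlocks]
  have hs₀ := hs₀.hasDerivAt
  have hq := (hs₂.div hs₀ h₀).div_const 2
  apply hasDerivAt_scalarBlocks_apply
  · refine ((hs₁.div hs₀ h₀).neg.div_const 2).congr_deriv ?_
    field_simp
    linear_combination hwronskian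
  · refine hq.congr_deriv ?_
    field_simp
    ring
  · refine hq.congr_deriv ?_
    field_simp
    ring
  · refine ((hs₀'.div hs₀ h₀).neg.div_const 2).congr_deriv ?_
    field_simp
    linear_combination (-s₀ t) * hode

lemma harnackMatrix_inv_eq {w t : ℝ} (h₀ : s₀ t ≠ 0) (hw : w ≠ 0)
    (hdet : s₁ t * deriv s₀ t - s₂ t ^ 2 = w * s₀ t) :
    (harnackMatrix n s₀ s₁ s₂ t)⁻¹
      = (-2 / w) • scalarBlocks n (deriv s₀ t) (s₂ t) (s₂ t) (s₁ t) := by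
  rw [smul_scalarBlocks]
  refine inv_eq_left_inv ?_
  rw [harnackMatrix_eq_scalarBlocks, scalarBlocks_mul, ← scalarBlocks_one]
  apply scalarBlocks_congr
  all_goals field_simp
  · linear_combination hdet
  · ring
  · ring
  · linear_combination hdet

lemma tendsto_harnackMatrix_inv_apply {l : Filter ℝ} {w : ℝ → ℝ} {c : ℝ} (hc : c ≠ 0)
    (hw : Tendsto w l (nhds c))
    (hdet : ∀ᶠ t in l, s₀ t ≠ 0 ∧ s₁ t * deriv s₀ t - s₂ t ^ 2 = w t * s₀ t)
    (hs₀ : Tendsto (deriv s₀) l (nhds 0)) (hs₁ : Tendsto s₁ l (nhds 0))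
    (hs₂ : Tendsto s₂ l (nhds 0)) (i j : Fin n ⊕ Fin n) :
    Tendsto (fun t => (harnackMatrix n s₀ s₁ s₂ t)⁻¹ i j) l (nhds 0) := by
  have hlim := (tendsto_const_nhds (x := (-2 : ℝ)).div hw hc).mul
    (tendsto_scalarBlocks_apply hs₀ hs₂ hs₂ hs₁ i j)
  rw [show scalarBlocks n 0 0 0 0 = 0 by simp [scalarBlocks], Matrix.zero_apply, mul_zero] at hlim
  refine hlim.congr' ?_
  filter_upwards [hdet, hw.eventually_ne hc] with t ⟨h₀, hdet⟩ hwt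
  rw [harnackMatrix_inv_eq h₀ hwt hdet, Matrix.smul_apply, smul_eq_mul, Pi.div_apply]

end harnackMatrix

lemma sinh_lt_mul_cosh {x : ℝ} (hx : 0 < x) : sinh x < x * cosh x := by
  have hmono : StrictMonoOn (fun y => y * cosh y - sinh y) (Ici 0) := by
    refine strictMonoOn_of_deriv_pos (convex_Ici 0) (by fun_prop) fun y hy => ?_
    rw [interior_Ici, mem_Ioi] at hy
    have hderiv : HasDerivAt (fun y => y * cosh y - sinh y) (y * sinh y) y := by
      refine (((hasDerivAt_id y).mul (hasDerivAt_cosh y)).sub (hasDerivAt_sinh y)).congr_deriv ?_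
      simp only [id, one_mul]
      ring
    rw [hderiv.deriv]
    exact mul_pos hy (sinh_pos_iff.mpr hy)
  simpa using hmono self_mem_Ici hx.le hx

section explicitSolution

variable {b : ℝ}

lemma sqrt_two_mul_sq_div_two (hb : 0 ≤ b) : √(2 * b ^ 2 / 2) = b := by
  rw [mul_div_cancel_left₀ _ two_ne_zero, sqrt_sq hb]

lemma s0D_two_mul_sq (hb : 0 ≤ b) :
    s0D (2 * b ^ 2) = fun t => cosh (2 * b * t) - 1 - b * t * sinh (2 * b * t) := by
  have h₂ : √(2 * (2 * b ^ 2)) = 2 * b := by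
    rw [show 2 * (2 * b ^ 2) = (2 * b) ^ 2 by ring, sqrt_sq (by positivity)]
  funext t
  rw [s0D, sqrt_two_mul_sq_div_two hb, h₂, mul_assoc 2 b t, cosh_two_mul, sinh_two_mul, cosh_sq]
  ring

lemma s1D_two_mul_sq (hb : 0 ≤ b) : s1D (2 * b ^ 2) = fun t => -4 * b ^ 3 * sinh (2 * b * t) := by
  have h₃ : √(2 * (2 * b ^ 2) ^ 3) = 4 * b ^ 3 := by
    rw [show 2 * (2 * b ^ 2) ^ 3 = (4 * b ^ 3) ^ 2 by ring, sqrt_sq (by positivity)]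
  funext t
  rw [s1D, sqrt_two_mul_sq_div_two hb, h₃, mul_assoc 2 b t, sinh_two_mul]
  ring

lemma s2D_two_mul_sq (hb : 0 ≤ b) :
    s2D (2 * b ^ 2) = fun t => -2 * b ^ 2 * (cosh (2 * b * t) - 1) := by
  funext t
  rw [s2D, sqrt_two_mul_sq_div_two hb, mul_assoc 2 b t, cosh_two_mul, cosh_sq]
  ring

lemma hasDerivAt_s0D (hb : 0 ≤ b) (t : ℝ) :
    HasDerivAt (s0D (2 * b ^ 2)) (b * (sinh (2 * b * t) - 2 * b * t * cosh (2 * b * t))) t := by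
  rw [s0D_two_mul_sq hb]
  have hu : HasDerivAt (fun t => 2 * b * t) (2 * b) t := hasDerivAt_const_mul _
  refine ((hu.cosh.sub_const 1).sub ((hasDerivAt_const_mul b).mul hu.sinh)).congr_deriv ?_
  ring

lemma deriv_s0D (hb : 0 ≤ b) :
    deriv (s0D (2 * b ^ 2)) = fun t => b * (sinh (2 * b * t) - 2 * b * t * cosh (2 * b * t)) :=
  funext fun t => (hasDerivAt_s0D hb t).deriv

lemma hasDerivAt_deriv_s0D (hb : 0 ≤ b) (t : ℝ) :
    HasDerivAt (deriv (s0D (2 * b ^ 2))) (-4 * b ^ 3 * t * sinh (2 * b * t)) t := by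
  rw [deriv_s0D hb]
  have hu : HasDerivAt (fun t => 2 * b * t) (2 * b) t := hasDerivAt_const_mul _
  refine ((hu.sinh.sub (hu.mul hu.cosh)).const_mul b).congr_deriv ?_
  ring

lemma hasDerivAt_s1D (hb : 0 ≤ b) (t : ℝ) :
    HasDerivAt (s1D (2 * b ^ 2)) (-8 * b ^ 4 * cosh (2 * b * t)) t := by
  rw [s1D_two_mul_sq hb]
  have hu : HasDerivAt (fun t => 2 * b * t) (2 * b) t := hasDerivAt_const_mul _
  refine (hu.sinh.const_mul (-4 * b ^ 3)).congr_deriv ?_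
  ring

lemma hasDerivAt_s2D (hb : 0 ≤ b) (t : ℝ) : HasDerivAt (s2D (2 * b ^ 2)) (s1D (2 * b ^ 2) t) t := by
  rw [s2D_two_mul_sq hb, s1D_two_mul_sq hb]
  have hu : HasDerivAt (fun t => 2 * b * t) (2 * b) t := hasDerivAt_const_mul _
  refine ((hu.cosh.sub_const 1).const_mul (-2 * b ^ 2)).congr_deriv ?_
  ring

lemma s1D_mul_deriv_s0D_sub_eq_sq (hb : 0 ≤ b) (t : ℝ) :
    s1D (2 * b ^ 2) t * deriv (s0D (2 * b ^ 2)) t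
        - -8 * b ^ 4 * cosh (2 * b * t) * s0D (2 * b ^ 2) t
      = s2D (2 * b ^ 2) t ^ 2 := by
  rw [deriv_s0D hb, s0D_two_mul_sq hb, s1D_two_mul_sq hb, s2D_two_mul_sq hb]
  linear_combination 4 * b ^ 4 * cosh_sq (2 * b * t)

lemma s0D_neg (hb : 0 < b) {t : ℝ} (ht : 0 < t) : s0D (2 * b ^ 2) t < 0 := by
  have hx : 0 < b * t := mul_pos hb ht
  have hsinh : 0 < sinh (b * t) := sinh_pos_iff.mpr hx
  have hlt := sinh_lt_mul_cosh hx
  -- `s₀(t) = 2 sinh(bt) (sinh(bt) - bt cosh(bt))`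
  simp only [s0D_two_mul_sq hb.le]
  rw [mul_assoc 2 b t, cosh_two_mul, sinh_two_mul, cosh_sq]
  nlinarith [mul_pos hsinh (sub_pos.mpr hlt)]

end explicitSolution

theorem riccati_explicit_case4_general (n : ℕ) (k₂ : ℝ) (hk₂ : 0 < k₂) :
    (∀ t : ℝ, 0 < t →
      ∀ i j, HasDerivAt (fun τ => harnackMatrix n (s0D k₂) (s1D k₂) (s2D k₂) τ i j)
        ((harnackMatrix n (s0D k₂) (s1D k₂) (s2D k₂) t * Cmat n
          + (Cmat n)ᵀ * harnackMatrix n (s0D k₂) (s1D k₂) (s2D k₂) t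
          + harnackMatrix n (s0D k₂) (s1D k₂) (s2D k₂) t * Dmat n *
              harnackMatrix n (s0D k₂) (s1D k₂) (s2D k₂) t
          - blockDiag n 0 k₂) i j) t) ∧
    (∀ i j, Tendsto (fun t => (harnackMatrix n (s0D k₂) (s1D k₂) (s2D k₂) t)⁻¹ i j)
      (nhdsWithin 0 (Ioi 0)) (nhds 0)) := by
  obtain ⟨b, hb, rfl⟩ : ∃ b, 0 < b ∧ k₂ = 2 * b ^ 2 :=
    ⟨√(k₂ / 2), by positivity, by rw [sq_sqrt (by positivity)]; ring⟩
  have hwronskian := s1D_mul_deriv_s0D_sub_eq_sq hb.le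
  refine ⟨fun t ht => harnackMatrix_hasDerivAt_riccati (s0D_neg hb ht).ne
    (hasDerivAt_s0D hb.le t).differentiableAt (hasDerivAt_deriv_s0D hb.le t)
    (hasDerivAt_s1D hb.le t) (hasDerivAt_s2D hb.le t) (by rw [hwronskian]; ring) ?_, ?_⟩
  · rw [s0D_two_mul_sq hb.le, s2D_two_mul_sq hb.le]
    ring
  have hcont : ∀ {f : ℝ → ℝ} {c : ℝ}, Continuous f → f 0 = c →
      Tendsto f (nhdsWithin 0 (Ioi 0)) (nhds c) :=
    fun hf h0 => (hf.tendsto' 0 _ h0).mono_left nhdsWithin_le_nhds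
  refine tendsto_harnackMatrix_inv_apply (w := fun t => -8 * b ^ 4 * cosh (2 * b * t))
    (c := -8 * b ^ 4) (by positivity) (hcont (by fun_prop) (by simp)) ?_ ?_ ?_ ?_
  · exact eventually_nhdsWithin_of_forall fun t ht =>
      ⟨(s0D_neg hb ht).ne, by linear_combination hwronskian t⟩
  · rw [deriv_s0D hb.le]
    exact hcont (by fun_prop) (by simp)
  · rw [s1D_two_mul_sq hb.le]
    exact hcont (by fun_prop) (by simp)
  · rw [s2D_two_mul_sq hb.le]
    exact hcont (by fun_prop) (by simp)

/-- **Explicit solution of the Riccati equation, case `k₁ = 0 < k₂`** (Lemma 3.3 (4)). -/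
theorem riccati_explicit_case4 (n : ℕ) (hn : 1 ≤ n) (k₂ : ℝ) (hk₂ : 0 < k₂) :
    (∀ t : ℝ, 0 < t →
      ∀ i j, HasDerivAt (fun τ => harnackMatrix n (s0D k₂) (s1D k₂) (s2D k₂) τ i j)
        ((harnackMatrix n (s0D k₂) (s1D k₂) (s2D k₂) t * Cmat n
          + (Cmat n)ᵀ * harnackMatrix n (s0D k₂) (s1D k₂) (s2D k₂) t
          + harnackMatrix n (s0D k₂) (s1D k₂) (s2D k₂) t * Dmat n *
              harnackMatrix n (s0D k₂) (s1D k₂) (s2D k₂) t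
          - blockDiag n 0 k₂) i j) t) ∧
    (∀ i j, Tendsto (fun t => (harnackMatrix n (s0D k₂) (s1D k₂) (s2D k₂) t)⁻¹ i j)
      (nhdsWithin 0 (Ioi 0)) (nhds 0)) :=
  riccati_explicit_case4_general n k₂ hk₂
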